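/- arXiv:2602.07575 — 7 statements merged into one kernel-verified Lean document; each statement's English description precedes it below -/
import Mathlib

section
/- For every t ∈ ℂ with t ≠ 0, t ≠ 1, t^m ≠ 1 and t^n ≠ 1, define B(t) := t^{-(m+1)(n+1)/2} · (1 - t^{mr})(1 - t^{ns})(t^m - t^n)^2 / ((1 - t^m)(1 - t^n)) and Δ(t) := t^{-(m-1)(n-1)/2} · (1 - t)(1 - t^{mn}) / ((1 - t^m)(1 - t^n)). Then t^{-mn} B(t^{-1}) - t^{mn} B(t) = t^{-(m+n)} · Δ(t) · (1 - t^{mr})(1 - t^{ns})(t^m - t^n)^2 / (1 - t). -/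
/-!
Write `a = (m+1)(n+1)/2` and `Q(t) = (1 - t^{mr})(1 - t^{ns})(t^m - t^n)^2 / ((1 - t^m)(1 - t^n))`,
so that `B(t) = t^{-a} Q(t)`. Inverting `t` divides `Q` by `t^{mr} t^{ns} t^m t^n = t^{1+m+n}`,
and since `m`, `n` are not both even, `2a = mn + m + n + 1` exactly; hence
`t^{-mn} B(t⁻¹) = t^{-a} Q(t)` and the left-hand side is `t^{-a} (1 - t^{mn}) Q(t)`.
The right-hand side is the same, because `(m-1)(n-1)/2 + m + n = a`.
-/

theorem IsCoprime.two_dvd_add_one_mul_add_one {m n : ℤ} (h : IsCoprime m n) :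
    2 ∣ (m + 1) * (n + 1) := by
  rw [← even_iff_two_dvd, Int.even_mul, Int.even_add_one, Int.even_add_one, ← not_and_or]
  rintro ⟨hm, hn⟩
  have := Int.isUnit_iff.mp (h.isUnit_of_dvd' hm.two_dvd hn.two_dvd)
  omega

theorem Int.sub_one_mul_sub_one_ediv_two (m n : ℤ) :
    (m - 1) * (n - 1) / 2 = (m + 1) * (n + 1) / 2 - (m + n) := by
  rw [show (m - 1) * (n - 1) = (m + 1) * (n + 1) + -(m + n) * 2 by ring,
    Int.add_mul_ediv_right _ _ two_ne_zero]
  ring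

section Field

variable {K : Type*} [Field K]

theorem one_sub_inv_eq_neg_div {X : K} (hX : X ≠ 0) : 1 - X⁻¹ = -(1 - X) / X := by
  field_simp
  ring

theorem sub_sq_ratio_inv {U V X Y : K} (hU : U ≠ 0) (hV : V ≠ 0) (hX : X ≠ 0) (hY : Y ≠ 0) :
    (1 - U⁻¹) * (1 - V⁻¹) * (X⁻¹ - Y⁻¹) ^ 2 / ((1 - X⁻¹) * (1 - Y⁻¹)) =
      (1 - U) * (1 - V) * (X - Y) ^ 2 / ((1 - X) * (1 - Y)) / (U * V * (X * Y)) := by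
  rw [one_sub_inv_eq_neg_div hU, one_sub_inv_eq_neg_div hV, one_sub_inv_eq_neg_div hX,
    one_sub_inv_eq_neg_div hY, inv_sub_inv hX hY]
  field_simp
  ring

theorem sub_sq_ratio_zpow_inv {t : K} (ht : t ≠ 0) {m n r s : ℤ} (h : m * r + n * s = 1) :
    (1 - t⁻¹ ^ (m * r)) * (1 - t⁻¹ ^ (n * s)) * (t⁻¹ ^ m - t⁻¹ ^ n) ^ 2 /
        ((1 - t⁻¹ ^ m) * (1 - t⁻¹ ^ n)) =
      (1 - t ^ (m * r)) * (1 - t ^ (n * s)) * (t ^ m - t ^ n) ^ 2 /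
        ((1 - t ^ m) * (1 - t ^ n)) / (t * (t ^ m * t ^ n)) := by
  have hpow (k : ℤ) : t ^ k ≠ 0 := zpow_ne_zero k ht
  simp only [inv_zpow]
  rw [sub_sq_ratio_inv (hpow _) (hpow _) (hpow _) (hpow _), ← zpow_add₀ ht, h, zpow_one]

end Field

theorem stmt_6_general (m n r s : ℤ) (hmn : IsCoprime m n)
    (hbezout : m * r + n * s = 1)
    (B Δ : ℂ → ℂ)
    (hB : ∀ t : ℂ, t ≠ 0 → t ≠ 1 → t ^ m ≠ 1 → t ^ n ≠ 1 →
      B t = t ^ (-((m + 1) * (n + 1) / 2)) *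
        ((1 - t ^ (m * r)) * (1 - t ^ (n * s)) * (t ^ m - t ^ n) ^ 2) /
          ((1 - t ^ m) * (1 - t ^ n)))
    (hΔ : ∀ t : ℂ, t ≠ 0 → t ≠ 1 → t ^ m ≠ 1 → t ^ n ≠ 1 →
      Δ t = t ^ (-((m - 1) * (n - 1) / 2)) * ((1 - t) * (1 - t ^ (m * n))) /
        ((1 - t ^ m) * (1 - t ^ n)))
    (t : ℂ) (ht0 : t ≠ 0) (ht1 : t ≠ 1) (htm : t ^ m ≠ 1) (htn : t ^ n ≠ 1) :
    t ^ (-(m * n)) * B t⁻¹ - t ^ (m * n) * B t =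
      t ^ (-(m + n)) * Δ t *
        ((1 - t ^ (m * r)) * (1 - t ^ (n * s)) * (t ^ m - t ^ n) ^ 2) / (1 - t) := by
  rw [hΔ t ht0 ht1 htm htn, Int.sub_one_mul_sub_one_ediv_two]
  set a := (m + 1) * (n + 1) / 2
  have ha : 2 * a = m * n + m + n + 1 := by
    rw [Int.mul_ediv_cancel' hmn.two_dvd_add_one_mul_add_one]; ring
  set Q := (1 - t ^ (m * r)) * (1 - t ^ (n * s)) * (t ^ m - t ^ n) ^ 2 /
    ((1 - t ^ m) * (1 - t ^ n))
  have hBt : B t = t ^ (-a) * Q := by rw [hB t ht0 ht1 htm htn, mul_div_assoc]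
  have hBinv : B t⁻¹ = t ^ a * Q / (t * (t ^ m * t ^ n)) := by
    have hinv (k : ℤ) (hk : t ^ k ≠ 1) : t⁻¹ ^ k ≠ 1 := by rwa [inv_zpow, inv_ne_one]
    rw [hB t⁻¹ (inv_ne_zero ht0) (inv_ne_one.mpr ht1) (hinv m htm) (hinv n htn), mul_div_assoc,
      sub_sq_ratio_zpow_inv ht0 hbezout, inv_zpow', neg_neg, ← mul_div_assoc]
  have hleft : t ^ (-(m * n)) * t ^ a / (t * (t ^ m * t ^ n)) = t ^ (-a) := by
    rw [← zpow_add₀ ht0, ← zpow_add₀ ht0, ← zpow_one_add₀ ht0, ← zpow_sub₀ ht0]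
    congr 1; linarith
  have hright : t ^ (-(m + n)) * t ^ (-(a - (m + n))) = t ^ (-a) := by
    rw [← zpow_add₀ ht0]; congr 1; ring
  calc t ^ (-(m * n)) * B t⁻¹ - t ^ (m * n) * B t
      = t ^ (-(m * n)) * t ^ a / (t * (t ^ m * t ^ n)) * Q - t ^ (m * n) * t ^ (-a) * Q := by
        rw [hBinv, hBt]; ring
    _ = t ^ (-(m + n)) * t ^ (-(a - (m + n))) * (1 - t ^ (m * n)) * Q := by
        rw [hleft, hright]; ring
    _ = _ := by
        simp only [Q]
        field_simp [sub_ne_zero.mpr ht1.symm]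

/-- For `t ∈ ℂ` with `t ≠ 0`, `t ≠ 1`, `t^m ≠ 1`, `t^n ≠ 1`, with
`B(t) := t^(-(m+1)(n+1)/2) (1 - t^(mr))(1 - t^(ns))(t^m - t^n)^2 / ((1 - t^m)(1 - t^n))` and
`Δ(t) := t^(-(m-1)(n-1)/2) (1 - t)(1 - t^(mn)) / ((1 - t^m)(1 - t^n))`, we have
`t^(-mn) B(t⁻¹) - t^(mn) B(t) = t^(-(m+n)) Δ(t) (1 - t^(mr))(1 - t^(ns))(t^m - t^n)^2 / (1 - t)`. -/
theorem stmt_6 (m n r s : ℤ) (hm : 1 < m) (hn : 1 < n) (hmn : IsCoprime m n)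
    (hbezout : m * r + n * s = 1) (hr₁ : -n < r) (hr₂ : r < 0) (hs₁ : 0 < s) (hs₂ : s < m)
    (B Δ : ℂ → ℂ)
    (hB : ∀ t : ℂ, t ≠ 0 → t ≠ 1 → t ^ m ≠ 1 → t ^ n ≠ 1 →
      B t = t ^ (-((m + 1) * (n + 1) / 2)) *
        ((1 - t ^ (m * r)) * (1 - t ^ (n * s)) * (t ^ m - t ^ n) ^ 2) /
          ((1 - t ^ m) * (1 - t ^ n)))
    (hΔ : ∀ t : ℂ, t ≠ 0 → t ≠ 1 → t ^ m ≠ 1 → t ^ n ≠ 1 →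
      Δ t = t ^ (-((m - 1) * (n - 1) / 2)) * ((1 - t) * (1 - t ^ (m * n))) /
        ((1 - t ^ m) * (1 - t ^ n)))
    (t : ℂ) (ht0 : t ≠ 0) (ht1 : t ≠ 1) (htm : t ^ m ≠ 1) (htn : t ^ n ≠ 1) :
    t ^ (-(m * n)) * B t⁻¹ - t ^ (m * n) * B t =
      t ^ (-(m + n)) * Δ t *
        ((1 - t ^ (m * r)) * (1 - t ^ (n * s)) * (t ^ m - t ^ n) ^ 2) / (1 - t) :=
  stmt_6_general m n r s hmn hbezout B Δ hB hΔ t ht0 ht1 htm htn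
end

section
/- Let m and n be coprime integers with m > 1 and n > 1, let q ∈ ℤ[t] be the polynomial satisfying (1 - t)(1 - t^{mn}) = q(t) · (1 - t^m)(1 - t^n), and regard q as an element of the Laurent polynomial ring ℤ[t^{±1}]. Then the image of t^n - t^m in the quotient ring ℤ[t^{±1}]/(q) is a unit. -/
/-!
Write `τ` for the image of `t` in `R = ℤ[t^{±1}]/(q)`. Cancelling `(1 - t)²` from the defining
identity gives `[mn] = q · [m] · [n]` with `[k] = 1 + t + ⋯ + t^(k-1)`; hence `q ∣ t^(mn) - 1`, so
`τ^(mn) = 1`, and `q(1) = 1`, so `t - 1 ∣ q - 1` and `τ - 1` is a unit. For `k` prime to `mn`,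
`τ` is a power of `τ^k`, so `τ^k - 1` divides `τ - 1` and is a unit as well. Finally
`τ^n - τ^m = ± τ^min(m,n) (τ^|n-m| - 1)` and `|n - m|` is prime to `mn`.
-/

open Polynomial LaurentPolynomial

section RootsOfUnity

variable {R : Type*} [CommRing R]

theorem isUnit_sub_one_of_pow_eq {u v : R} {j : ℕ} (hv : v ^ j = u) (hu : IsUnit (u - 1)) :
    IsUnit (v - 1) :=
  isUnit_of_dvd_unit (hv ▸ sub_one_dvd_pow_sub_one v j) hu

theorem isUnit_pow_sub_one_of_coprime {u : R} {N k : ℕ} (huN : u ^ N = 1) (hN : 1 < N)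
    (hu : IsUnit (u - 1)) (hk : k.Coprime N) : IsUnit (u ^ k - 1) := by
  obtain ⟨j, hj⟩ := Nat.exists_mul_mod_eq_one_of_coprime hk hN
  refine isUnit_sub_one_of_pow_eq (j := j) ?_ hu
  rw [← pow_mul, pow_eq_pow_mod _ huN, hj.2, pow_one]

theorem isUnit_pow_sub_pow_of_coprime {u : R} {N m n : ℕ} (huN : u ^ N = 1) (hN : 1 < N)
    (hu : IsUnit (u - 1)) (hmn : m ≤ n) (hk : (n - m).Coprime N) : IsUnit (u ^ n - u ^ m) := by
  have hfactor : u ^ n - u ^ m = u ^ m * (u ^ (n - m) - 1) := by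
    rw [mul_sub, mul_one, ← pow_add, Nat.add_sub_cancel' hmn]
  rw [hfactor]
  exact ((IsUnit.of_pow_eq_one huN (by omega)).pow m).mul
    (isUnit_pow_sub_one_of_coprime huN hN hu hk)

end RootsOfUnity

theorem Nat.Coprime.sub_coprime_mul {m n : ℕ} (hmn : m.Coprime n) (hle : m ≤ n) :
    (n - m).Coprime (m * n) :=
  ((Nat.coprime_sub_self_left hle).2 hmn.symm).mul_right ((Nat.coprime_self_sub_left hle).2 hmn)

namespace Polynomial

variable {R : Type*} [CommRing R]

theorem isUnit_map_X_sub_one {S : Type*} [CommRing S] (φ : R[X] →+* S) {q : R[X]}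
    (hq : φ q = 0) (hq1 : q.eval 1 = 1) : IsUnit (φ X - 1) := by
  have hdvd : X - 1 ∣ q - 1 := by simpa [hq1] using X_sub_C_dvd_sub_C_eval (a := (1 : R)) (p := q)
  have h := _root_.map_dvd φ hdvd
  rw [map_sub, map_sub, map_one, hq, zero_sub] at h
  exact isUnit_of_dvd_unit h isUnit_one.neg

variable [IsDomain R] {m n : ℕ} {q : R[X]}

theorem geom_sum_eq_mul_of_mul_eq
    (hq : (1 - X) * (1 - X ^ (m * n)) = q * ((1 - X ^ m) * (1 - X ^ n))) :
    ∑ i ∈ Finset.range (m * n), (X : R[X]) ^ i =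
      q * ((∑ i ∈ Finset.range m, (X : R[X]) ^ i) * ∑ i ∈ Finset.range n, (X : R[X]) ^ i) := by
  have h1X : (1 - X : R[X]) ≠ 0 := sub_ne_zero.2 (by simpa using (X_ne_C (1 : R)).symm)
  apply mul_left_cancel₀ (pow_ne_zero 2 h1X)
  rw [← mul_neg_geom_sum, ← mul_neg_geom_sum, ← mul_neg_geom_sum] at hq
  linear_combination hq

theorem dvd_X_pow_mul_sub_one_of_mul_eq
    (hq : (1 - X) * (1 - X ^ (m * n)) = q * ((1 - X ^ m) * (1 - X ^ n))) :
    q ∣ X ^ (m * n) - 1 := by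
  rw [← geom_sum_mul, geom_sum_eq_mul_of_mul_eq hq, mul_assoc]
  exact dvd_mul_right _ _

theorem eval_one_eq_one_of_mul_eq [CharZero R] (hm : m ≠ 0) (hn : n ≠ 0)
    (hq : (1 - X) * (1 - X ^ (m * n)) = q * ((1 - X ^ m) * (1 - X ^ n))) :
    q.eval 1 = 1 := by
  have h := congrArg (eval 1) (geom_sum_eq_mul_of_mul_eq hq)
  simp only [eval_finsetSum, eval_pow, eval_X, one_pow, Finset.sum_const, Finset.card_range,
    nsmul_eq_mul, mul_one, eval_mul, Nat.cast_mul] at h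
  have hmn : (m * n : R) ≠ 0 := by positivity
  exact (mul_left_cancel₀ hmn (by linear_combination h)).symm

end Polynomial

theorem stmt_7_general (m n : ℕ) (hm : 1 < m) (hmn : Nat.Coprime m n)
    (q : Polynomial ℤ)
    (hq : (1 - X) * (1 - X ^ (m * n)) = q * ((1 - X ^ m) * (1 - X ^ n))) :
    IsUnit (Ideal.Quotient.mk (Ideal.span {Polynomial.toLaurent q})
      (T (n : ℤ) - T (m : ℤ))) := by
  set φ := (Ideal.Quotient.mk (Ideal.span {toLaurent q})).comp (toLaurent (R := ℤ))
  have hn : n ≠ 0 := by rintro rfl; simp at hmn; omega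
  have hφq : φ q = 0 := by
    rw [RingHom.comp_apply, Ideal.Quotient.eq_zero_iff_mem]
    exact Ideal.mem_span_singleton_self _
  have hroot : φ X ^ (m * n) = 1 := by
    have := zero_dvd_iff.1 (hφq ▸ _root_.map_dvd φ (dvd_X_pow_mul_sub_one_of_mul_eq hq))
    rwa [map_sub, map_pow, map_one, sub_eq_zero] at this
  have hN : 1 < m * n := by nlinarith [Nat.pos_of_ne_zero hn]
  have hunit := isUnit_map_X_sub_one φ hφq (eval_one_eq_one_of_mul_eq (by omega) hn hq)
  have hT (k : ℕ) : Ideal.Quotient.mk _ (T (k : ℤ)) = φ X ^ k := by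
    rw [← map_pow, RingHom.comp_apply, toLaurent_X_pow]
  rw [map_sub, hT, hT]
  rcases le_total m n with hle | hle
  · exact isUnit_pow_sub_pow_of_coprime hroot hN hunit hle (hmn.sub_coprime_mul hle)
  · rw [← neg_sub]
    refine (isUnit_pow_sub_pow_of_coprime hroot hN hunit hle ?_).neg
    rw [mul_comm]
    exact hmn.symm.sub_coprime_mul hle

/-- Let `m, n > 1` be coprime and let `q ∈ ℤ[t]` satisfy
`(1 - t)(1 - t^(mn)) = q(t) (1 - t^m)(1 - t^n)`; regard `q` as a Laurent polynomial.
Then the image of `t^n - t^m` in `ℤ[t^{±1}]/(q)` is a unit. -/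
theorem stmt_7 (m n : ℕ) (hm : 1 < m) (hn : 1 < n) (hmn : Nat.Coprime m n)
    (q : Polynomial ℤ)
    (hq : (1 - X) * (1 - X ^ (m * n)) = q * ((1 - X ^ m) * (1 - X ^ n))) :
    IsUnit (Ideal.Quotient.mk (Ideal.span {Polynomial.toLaurent q})
      (T (n : ℤ) - T (m : ℤ))) :=
  stmt_7_general m n hm hmn q hq
end

section
/- Suppose t^n ≠ 1. Then the matrix I - P·Y^{-1} is invertible, and V := (I - P·Y^{-1})^{-1} satisfies (I - Y^{-1})·V = I - (I - P)·Y^{-1} and (I - P)·V = I - P. -/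
/-!
All matrices involved are diagonal, so everything is checked entrywise. The entries of `Y` are
`t ζᵢ` with `ζᵢ ^ n = 1`, so `t ^ n ≠ 1` forces `t ζᵢ ≠ 1`; as the entries `pᵢ` of `P` are `0` or
`1`, the entry `1 - pᵢ / (t ζᵢ)` of `I - P Y⁻¹` is nonzero, and the identities hold entrywise in
each of the two cases.
-/

open Matrix

section DiagonalMatrices

variable {ι K : Type*} [Fintype ι] [DecidableEq ι] [Field K] {p y : ι → K}

theorem one_sub_div_ne_zero_of_eq_zero_or_eq_one {p y : K} (hp : p = 0 ∨ p = 1) (hy : y ≠ 1) :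
    1 - p / y ≠ 0 := by
  rcases hp with rfl | rfl
  · simp
  · rwa [one_div, sub_ne_zero, ne_comm, Ne, inv_eq_one]

theorem inv_diagonal_of_ne_zero (hy : ∀ i, y i ≠ 0) :
    (diagonal y)⁻¹ = diagonal fun i => (y i)⁻¹ :=
  inv_eq_right_inv <| by simp [diagonal_mul_diagonal, hy, ← diagonal_one]

theorem one_sub_diagonal_mul_inv_diagonal (hy : ∀ i, y i ≠ 0) :
    1 - diagonal p * (diagonal y)⁻¹ = diagonal fun i => 1 - p i / y i := by
  simp only [inv_diagonal_of_ne_zero hy, diagonal_mul_diagonal, ← diagonal_one, diagonal_sub,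
    div_eq_mul_inv]

variable (hp : ∀ i, p i = 0 ∨ p i = 1) (hy0 : ∀ i, y i ≠ 0) (hy1 : ∀ i, y i ≠ 1)
include hp hy0 hy1

theorem isUnit_one_sub_diagonal_mul_inv : IsUnit (1 - diagonal p * (diagonal y)⁻¹) := by
  rw [one_sub_diagonal_mul_inv_diagonal hy0, isUnit_diagonal, Pi.isUnit_iff]
  exact fun i => (one_sub_div_ne_zero_of_eq_zero_or_eq_one (hp i) (hy1 i)).isUnit

theorem inv_one_sub_diagonal_mul_inv :
    (1 - diagonal p * (diagonal y)⁻¹)⁻¹ = diagonal fun i => (1 - p i / y i)⁻¹ := by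
  rw [one_sub_diagonal_mul_inv_diagonal hy0,
    inv_diagonal_of_ne_zero fun i => one_sub_div_ne_zero_of_eq_zero_or_eq_one (hp i) (hy1 i)]

theorem one_sub_inv_mul_inv_one_sub_diagonal_mul_inv :
    (1 - (diagonal y)⁻¹) * (1 - diagonal p * (diagonal y)⁻¹)⁻¹ =
      1 - (1 - diagonal p) * (diagonal y)⁻¹ := by
  rw [inv_one_sub_diagonal_mul_inv hp hy0 hy1, inv_diagonal_of_ne_zero hy0, ← diagonal_one]
  simp only [diagonal_sub, diagonal_mul_diagonal]
  refine congrArg diagonal (funext fun i => ?_)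
  rcases hp i with h | h
  · simp [h]
  · have := one_sub_div_ne_zero_of_eq_zero_or_eq_one (hp i) (hy1 i)
    rw [h, one_div] at this
    simp [h, this]

theorem one_sub_diagonal_mul_inv_one_sub_diagonal_mul_inv :
    (1 - diagonal p) * (1 - diagonal p * (diagonal y)⁻¹)⁻¹ = 1 - diagonal p := by
  rw [inv_one_sub_diagonal_mul_inv hp hy0 hy1, ← diagonal_one]
  simp only [diagonal_sub, diagonal_mul_diagonal]
  refine congrArg diagonal (funext fun i => ?_)
  rcases hp i with h | h <;> simp [h]

end DiagonalMatrices

theorem exp_two_pi_I_mul_int_div_pow_self (k : ℤ) (n : ℕ) :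
    Complex.exp (2 * Real.pi * Complex.I * k / n) ^ n = 1 := by
  rcases eq_or_ne n 0 with rfl | hn
  · simp
  · rw [← Complex.exp_nat_mul, mul_div_cancel₀ _ (Nat.cast_ne_zero.mpr hn), mul_comm,
      Complex.exp_int_mul_two_pi_mul_I]

theorem stmt_9_general (m n : ℕ) (t : ℂ) (ht0 : t ≠ 0) (htn : t ^ n ≠ 1) (b : Fin m → ℤ) (a : ℤ)
    (Y P V : Matrix (Fin m) (Fin m) ℂ)
    (hY : Y = t • Matrix.diagonal
      (fun i => Complex.exp (2 * (Real.pi : ℂ) * Complex.I * (b i : ℂ) / (n : ℂ))))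
    (hP : P = Matrix.diagonal (fun i => if (n : ℤ) ∣ (b i + a) then 0 else 1))
    (hV : V = (1 - P * Y⁻¹)⁻¹) :
    IsUnit (1 - P * Y⁻¹) ∧
    (1 - Y⁻¹) * V = 1 - (1 - P) * Y⁻¹ ∧
    (1 - P) * V = 1 - P := by
  set ζ : Fin m → ℂ := fun i => Complex.exp (2 * Real.pi * Complex.I * b i / n)
  have hY' : Y = diagonal fun i => t * ζ i := by rw [hY, ← diagonal_smul]; rfl
  have hy0 : ∀ i, t * ζ i ≠ 0 := fun i => mul_ne_zero ht0 (Complex.exp_ne_zero _)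
  have hy1 : ∀ i, t * ζ i ≠ 1 := fun i h =>
    htn (by simpa [mul_pow, ζ, exp_two_pi_I_mul_int_div_pow_self] using congrArg (· ^ n) h)
  have hp : ∀ i, (if (n : ℤ) ∣ (b i + a) then (0 : ℂ) else 1) = 0 ∨
      (if (n : ℤ) ∣ (b i + a) then (0 : ℂ) else 1) = 1 := fun i => by split_ifs <;> simp
  subst hP hV
  rw [hY']
  exact ⟨isUnit_one_sub_diagonal_mul_inv hp hy0 hy1,
    one_sub_inv_mul_inv_one_sub_diagonal_mul_inv hp hy0 hy1,
    one_sub_diagonal_mul_inv_one_sub_diagonal_mul_inv hp hy0 hy1⟩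

/-- If `t^n ≠ 1` then `I - P Y⁻¹` is invertible and `V := (I - P Y⁻¹)⁻¹` satisfies
`(I - Y⁻¹) V = I - (I - P) Y⁻¹` and `(I - P) V = I - P`. -/
theorem stmt_9 (m n : ℕ) (hm : 1 < m) (hn : 1 < n) (hmn : Nat.Coprime m n)
    (t : ℂ) (ht0 : t ≠ 0) (htn : t ^ n ≠ 1)
    (b : Fin m → ℤ) (hb : (n : ℤ) ∣ ∑ i, b i)
    (a : ℤ) (ha : ¬ (n : ℤ) ∣ a)
    (Y P V : Matrix (Fin m) (Fin m) ℂ)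
    (hY : Y = t • Matrix.diagonal
      (fun i => Complex.exp (2 * (Real.pi : ℂ) * Complex.I * (b i : ℂ) / (n : ℂ))))
    (hP : P = Matrix.diagonal (fun i => if (n : ℤ) ∣ (b i + a) then 0 else 1))
    (hV : V = (1 - P * Y⁻¹)⁻¹) :
    IsUnit (1 - P * Y⁻¹) ∧
    (1 - Y⁻¹) * V = 1 - (1 - P) * Y⁻¹ ∧
    (1 - P) * V = 1 - P :=
  stmt_9_general m n t ht0 htn b a Y P V hY hP hV
end

section
/- The matrix I - (I - P)·X^{-1} has determinant 1, hence is invertible, and W := (I - (I - P)·X^{-1})^{-1} satisfies: (I - P)·(I - X^{-1})·W = I - P, P·W = P, and (Σ_{i=0}^{m-1} X^i)·X·P = W·P·(Σ_{i=0}^{m-1} X^i)·X·P. -/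
/-!
`C` is `diag(1, …, 1, t)` times the permutation matrix of the `m`-cycle `i ↦ i + 1`, and a
power of such a monomial matrix multiplies the weights along orbits; hence `C ^ m = t • 1`,
`X ^ m = t ^ n • 1`, and `X⁻¹ = t⁻ⁿ • C ^ (n (m - 1))` is again monomial for a full cycle,
since `n (m - 1)` is coprime to `m`. As `n ∤ m a`, some `b i + a` is not divisible by `n`, so
`(1 - P) X⁻¹` is monomial for a full cycle with a zero weight, hence nilpotent, and
`det (1 - (1 - P) X⁻¹) = 1`. The three identities are then ring algebra for the idempotent `P`,
using that `(1 - X⁻¹) (∑ X ^ i) X = X ^ m - 1` is a scalar.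
-/

open Matrix Finset

theorem Matrix.det_one_sub_of_isNilpotent {n R : Type*} [Fintype n] [DecidableEq n] [CommRing R]
    [IsReduced R] {M : Matrix n n R} (hM : IsNilpotent M) : (1 - M).det = 1 := by
  have h := ((isNilpotent_charpoly_sub_pow_of_isNilpotent hM).map
    (Polynomial.evalRingHom (1 : R))).eq_zero
  simpa [eval_charpoly, sub_eq_zero] using h

namespace Equiv.Perm

variable {ι : Type*} [Fintype ι] [DecidableEq ι] {σ : Perm ι}

theorem IsCycle.orderOf_eq_card (hσ : σ.IsCycle) (hsupp : σ.support = univ) :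
    orderOf σ = Fintype.card ι := by
  rw [hσ.orderOf, hsupp, card_univ]

theorem IsCycle.prod_range_card_pow_apply {M : Type*} [CommMonoid M] (hσ : σ.IsCycle)
    (hsupp : σ.support = univ) (f : ι → M) (i : ι) :
    ∏ j ∈ range (Fintype.card ι), f ((σ ^ j) i) = ∏ x, f x := by
  have hsurj : Function.Surjective fun j : Fin (Fintype.card ι) => (σ ^ (j : ℕ)) i := by
    intro x
    obtain ⟨j, hj, hx⟩ := (hσ.sameCycle (mem_support.mp (hsupp ▸ mem_univ i))
      (mem_support.mp (hsupp ▸ mem_univ x))).exists_pow_eq'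
    exact ⟨⟨j, hσ.orderOf_eq_card hsupp ▸ hj⟩, hx⟩
  rw [← Fin.prod_univ_eq_prod_range]
  exact Fintype.prod_bijective _
    ((Fintype.bijective_iff_surjective_and_card _).mpr ⟨hsurj, by simp⟩) _ _ fun _ => rfl

theorem IsCycle.pow_of_coprime (hσ : σ.IsCycle) (hsupp : σ.support = univ) {k : ℕ}
    (hk : k.Coprime (Fintype.card ι)) : (σ ^ k).IsCycle ∧ (σ ^ k).support = univ := by
  have horder := hσ.orderOf_eq_card hsupp
  refine ⟨hσ.pow_iff.mpr (horder ▸ hk), ?_⟩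
  rw [hσ.support_pow_eq_iff.mpr, hsupp]
  intro hdvd
  have := hσ.two_le_card_support
  rw [hsupp, card_univ, hk.symm.eq_one_of_dvd (horder ▸ hdvd)] at this
  omega

end Equiv.Perm

namespace Matrix

variable {ι R : Type*} [Fintype ι] [DecidableEq ι] [CommSemiring R]

theorem permMatrix_mul_diagonal (σ : Equiv.Perm ι) (f : ι → R) :
    σ.permMatrix R * diagonal f = diagonal (f ∘ σ) * σ.permMatrix R := by
  ext i j
  rw [PEquiv.toMatrix_toPEquiv_mul, diagonal_mul, submatrix_apply]
  simp [diagonal_apply, PEquiv.toMatrix_apply, eq_comm]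

theorem diagonal_mul_permMatrix_pow (w : ι → R) (σ : Equiv.Perm ι) (k : ℕ) :
    (diagonal w * σ.permMatrix R) ^ k =
      diagonal (fun i => ∏ j ∈ range k, w ((σ ^ j) i)) * (σ ^ k).permMatrix R := by
  induction k with
  | zero => simp
  | succ k ih =>
    rw [pow_succ', ih, mul_assoc, ← mul_assoc (σ.permMatrix R), permMatrix_mul_diagonal,
      mul_assoc, ← permMatrix_mul, ← pow_succ, ← mul_assoc, diagonal_mul_diagonal]
    congr 2
    ext i
    simp [prod_range_succ', ← Equiv.Perm.mul_apply, ← pow_succ, mul_comm]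

theorem diagonal_mul_permMatrix_pow_card {σ : Equiv.Perm ι} (hσ : σ.IsCycle)
    (hsupp : σ.support = univ) (w : ι → R) :
    (diagonal w * σ.permMatrix R) ^ Fintype.card ι = (∏ i, w i) • 1 := by
  rw [diagonal_mul_permMatrix_pow, ← hσ.orderOf_eq_card hsupp, pow_orderOf_eq_one,
    permMatrix_one, mul_one, smul_one_eq_diagonal, hσ.orderOf_eq_card hsupp]
  simp only [hσ.prod_range_card_pow_apply hsupp]

theorem isNilpotent_diagonal_mul_permMatrix {σ : Equiv.Perm ι} (hσ : σ.IsCycle)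
    (hsupp : σ.support = univ) {w : ι → R} (hw : ∃ i, w i = 0) :
    IsNilpotent (diagonal w * σ.permMatrix R) := by
  obtain ⟨i, hi⟩ := hw
  exact ⟨_, by rw [diagonal_mul_permMatrix_pow_card hσ hsupp, prod_eq_zero (mem_univ i) hi,
    zero_smul]⟩

end Matrix

section TwistedShift

variable {R : Type*} [CommSemiring R] {m : ℕ}

def twistedShift (m : ℕ) (t : R) : Matrix (Fin m) (Fin m) R :=
  diagonal (fun i : Fin m => if (i : ℕ) = m - 1 then t else 1) * (finRotate m).permMatrix R

theorem twistedShift_apply (t : R) (i j : Fin m) :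
    twistedShift m t i j =
      if (i : ℕ) + 1 = (j : ℕ) then 1 else if (i : ℕ) = m - 1 ∧ (j : ℕ) = 0 then t else 0 := by
  obtain _ | k := m
  · exact i.elim0
  have hrot : (finRotate (k + 1) i : ℕ) = if (i : ℕ) = k then 0 else (i : ℕ) + 1 := by
    rw [finRotate_apply, Fin.val_add_one]
    simp [Fin.ext_iff]
  simp only [twistedShift, diagonal_mul, PEquiv.toMatrix_apply, Equiv.toPEquiv_apply,
    Option.mem_def, Option.some.injEq, Fin.ext_iff, hrot, add_tsub_cancel_right]
  have := j.isLt
  by_cases hi : (i : ℕ) = k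
  · rw [if_neg (by omega : (i : ℕ) + 1 ≠ j)]
    by_cases hj : (j : ℕ) = 0 <;> simp [hi, hj, eq_comm]
  · simp [hi]

theorem twistedShift_pow_self (hm : 2 ≤ m) (t : R) : twistedShift m t ^ m = t • 1 := by
  have h := diagonal_mul_permMatrix_pow_card (isCycle_finRotate_of_le hm)
    (support_finRotate_of_le hm) (fun i : Fin m => if (i : ℕ) = m - 1 then t else 1)
  rw [Fintype.card_fin] at h
  rw [twistedShift, h, Fintype.prod_eq_single ⟨m - 1, by omega⟩ fun i hi => if_neg ?_, if_pos rfl]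
  exact fun h => hi (Fin.ext h)

theorem isNilpotent_diagonal_mul_twistedShift_pow (hm : 2 ≤ m) {k : ℕ} (hk : k.Coprime m)
    (t : R) {w : Fin m → R} (hw : ∃ i, w i = 0) :
    IsNilpotent (diagonal w * twistedShift m t ^ k) := by
  obtain ⟨hcyc, hsupp⟩ := (isCycle_finRotate_of_le hm).pow_of_coprime
    (support_finRotate_of_le hm) (by rwa [Fintype.card_fin])
  rw [twistedShift, diagonal_mul_permMatrix_pow, ← mul_assoc, diagonal_mul_diagonal]
  obtain ⟨i, hi⟩ := hw
  exact isNilpotent_diagonal_mul_permMatrix hcyc hsupp ⟨i, by simp [hi]⟩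

end TwistedShift

theorem exists_not_dvd_add {ι : Type*} [Fintype ι] {n : ℕ} (hcop : (Fintype.card ι).Coprime n)
    {b : ι → ℤ} (hb : (n : ℤ) ∣ ∑ i, b i) {a : ℤ} (ha : ¬ (n : ℤ) ∣ a) :
    ∃ i, ¬ (n : ℤ) ∣ b i + a := by
  by_contra! hall
  have hsum : (n : ℤ) ∣ ∑ i, (b i + a) := dvd_sum fun i _ => hall i
  rw [sum_add_distrib, sum_const, card_univ, nsmul_eq_mul,
    dvd_add_right hb] at hsum
  exact ha ((Nat.isCoprime_iff_coprime.mpr hcop.symm).dvd_of_dvd_mul_left hsum)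

section IdempotentCompression

variable {R : Type*} [Ring R] {P Y W : R}

theorem IsIdempotentElem.mul_eq_self_of_mul_eq_one (hP : IsIdempotentElem P)
    (hAW : (1 - (1 - P) * Y) * W = 1) : P * W = P := by
  have hPA : P * (1 - (1 - P) * Y) = P := by
    rw [mul_sub, mul_one, ← mul_assoc, mul_sub, mul_one, hP.eq, sub_self, zero_mul, sub_zero]
  rw [← hPA, mul_assoc, hAW, mul_one, hPA]

theorem IsIdempotentElem.compl_mul_one_sub_mul_eq_compl (hP : IsIdempotentElem P)
    (hAW : (1 - (1 - P) * Y) * W = 1) : (1 - P) * (1 - Y) * W = 1 - P := by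
  have h : (1 - P) * (1 - Y) = (1 - (1 - P) * Y) - P := by noncomm_ring
  rw [h, sub_mul, hAW, hP.mul_eq_self_of_mul_eq_one hAW]

theorem IsIdempotentElem.mul_eq_mul_mul_mul_of_commute (hP : IsIdempotentElem P)
    (hWA : W * (1 - (1 - P) * Y) = 1) {Z : R} (hZ : Commute ((1 - Y) * Z) P) :
    Z * P = W * P * Z * P := by
  have hkill : (1 - P) * (1 - Y) * Z * P = 0 := by
    rw [mul_assoc (1 - P), mul_assoc, hZ.eq, ← mul_assoc, sub_mul, one_mul, hP.eq, sub_self,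
      zero_mul]
  have hA : (1 - (1 - P) * Y) * Z * P = P * Z * P := by
    rw [← sub_eq_zero, ← hkill]
    noncomm_ring
  calc Z * P = W * (1 - (1 - P) * Y) * Z * P := by rw [hWA, one_mul]
    _ = W * P * Z * P := by simp only [mul_assoc] at hA ⊢; rw [hA]

end IdempotentCompression

theorem one_sub_mul_geom_sum_mul {R : Type*} [Ring R] {X Y : R} (h : Y * X = 1) (m : ℕ) :
    (1 - Y) * ((∑ i ∈ range m, X ^ i) * X) = X ^ m - 1 := by
  have hcomm : Commute (∑ i ∈ range m, X ^ i) X :=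
    Commute.sum_left _ _ _ fun i _ => (Commute.refl X).pow_left i
  rw [hcomm.eq, ← mul_assoc, sub_mul, one_mul, h, mul_geom_sum]

theorem stmt_10_general (m n : ℕ) (hm : 1 < m) (hmn : Nat.Coprime m n)
    (t : ℂ) (ht0 : t ≠ 0)
    (b : Fin m → ℤ) (hb : (n : ℤ) ∣ ∑ i, b i)
    (a : ℤ) (ha : ¬ (n : ℤ) ∣ a)
    (C X P W : Matrix (Fin m) (Fin m) ℂ)
    (hC : ∀ i j : Fin m, C i j =
      if (i : ℕ) + 1 = (j : ℕ) then 1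
      else if (i : ℕ) = m - 1 ∧ (j : ℕ) = 0 then t else 0)
    (hX : X = C ^ n)
    (hP : P = Matrix.diagonal (fun i => if (n : ℤ) ∣ (b i + a) then 0 else 1))
    (hW : W = (1 - (1 - P) * X⁻¹)⁻¹) :
    (1 - (1 - P) * X⁻¹).det = 1 ∧
    IsUnit (1 - (1 - P) * X⁻¹) ∧
    (1 - P) * (1 - X⁻¹) * W = 1 - P ∧
    P * W = P ∧
    (∑ i ∈ Finset.range m, X ^ i) * X * P =
      W * P * (∑ i ∈ Finset.range m, X ^ i) * X * P := by
  have hCt : C = twistedShift m t := ext fun i j => (hC i j).trans (twistedShift_apply t i j).symm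
  have hXm : X ^ m = t ^ n • 1 := by
    rw [hX, ← pow_mul, mul_comm, pow_mul, hCt, twistedShift_pow_self hm, smul_pow, one_pow]
  have hright : X * ((t ^ n)⁻¹ • X ^ (m - 1)) = 1 := by
    rw [mul_smul_comm, ← pow_succ', Nat.sub_add_cancel hm.le, hXm, smul_smul,
      inv_mul_cancel₀ (pow_ne_zero n ht0), one_smul]
  have hXinv : X⁻¹ = (t ^ n)⁻¹ • X ^ (m - 1) := inv_eq_right_inv hright
  have hnil : IsNilpotent ((1 - P) * X⁻¹) := by
    have hQ : 1 - P = diagonal fun i => 1 - if (n : ℤ) ∣ b i + a then 0 else 1 := by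
      rw [hP, ← diagonal_one, diagonal_sub]
    have hcop : (n * (m - 1)).Coprime m :=
      hmn.symm.mul_left ((Nat.coprime_self_sub_left hm.le).mpr (Nat.coprime_one_left m))
    obtain ⟨i, hi⟩ := exists_not_dvd_add (by rwa [Fintype.card_fin]) hb ha
    rw [hXinv, mul_smul_comm, hX, ← pow_mul, hCt, hQ]
    exact (isNilpotent_diagonal_mul_twistedShift_pow hm hcop t ⟨i, by simp [hi]⟩).smul _
  have hdet := det_one_sub_of_isNilpotent hnil
  have hAW : (1 - (1 - P) * X⁻¹) * W = 1 := hW ▸ mul_nonsing_inv _ (hdet ▸ isUnit_one)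
  have hWA : W * (1 - (1 - P) * X⁻¹) = 1 := hW ▸ nonsing_inv_mul _ (hdet ▸ isUnit_one)
  have hPidem : IsIdempotentElem P := by
    rw [hP, IsIdempotentElem, diagonal_mul_diagonal]
    congr! 2 with i
    split_ifs <;> simp
  have hinvX : X⁻¹ * X = 1 := hXinv ▸ mul_eq_one_comm.mp hright
  refine ⟨hdet, (isUnit_iff_isUnit_det _).mpr (hdet ▸ isUnit_one),
    hPidem.compl_mul_one_sub_mul_eq_compl hAW, hPidem.mul_eq_self_of_mul_eq_one hAW, ?_⟩
  have hscalar : Commute ((1 - X⁻¹) * ((∑ i ∈ range m, X ^ i) * X)) P := by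
    rw [one_sub_mul_geom_sum_mul hinvX, hXm]
    exact ((Commute.one_left P).smul_left _).sub_left (Commute.one_left P)
  simpa only [mul_assoc] using hPidem.mul_eq_mul_mul_mul_of_commute hWA hscalar

/-- `det (I - (I - P) X⁻¹) = 1`, hence invertible, and `W := (I - (I - P) X⁻¹)⁻¹`
satisfies `(I - P)(I - X⁻¹) W = I - P`, `P W = P`, and
`(Σ_{i<m} X^i) X P = W P (Σ_{i<m} X^i) X P`. -/
theorem stmt_10 (m n : ℕ) (hm : 1 < m) (hn : 1 < n) (hmn : Nat.Coprime m n)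
    (t : ℂ) (ht0 : t ≠ 0)
    (b : Fin m → ℤ) (hb : (n : ℤ) ∣ ∑ i, b i)
    (a : ℤ) (ha : ¬ (n : ℤ) ∣ a)
    (C X P W : Matrix (Fin m) (Fin m) ℂ)
    (hC : ∀ i j : Fin m, C i j =
      if (i : ℕ) + 1 = (j : ℕ) then 1
      else if (i : ℕ) = m - 1 ∧ (j : ℕ) = 0 then t else 0)
    (hX : X = C ^ n)
    (hP : P = Matrix.diagonal (fun i => if (n : ℤ) ∣ (b i + a) then 0 else 1))
    (hW : W = (1 - (1 - P) * X⁻¹)⁻¹) :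
    (1 - (1 - P) * X⁻¹).det = 1 ∧
    IsUnit (1 - (1 - P) * X⁻¹) ∧
    (1 - P) * (1 - X⁻¹) * W = 1 - P ∧
    P * W = P ∧
    (∑ i ∈ Finset.range m, X ^ i) * X * P =
      W * P * (∑ i ∈ Finset.range m, X ^ i) * X * P :=
  stmt_10_general m n hm hmn t ht0 b hb a ha C X P W hC hX hP hW
end

section
/- We have (Σ_{i=0}^{s-1} X^i) · adj(Σ_{i=0}^{m-1} X^i) = (1 - t^n)^{m-2} · (I - X^s), where adj denotes the adjugate matrix and I is the m×m identity matrix. -/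
/-!
Write `A = ∑_{i<m} X^i`. Since `C^m = t I`, the geometric sum telescopes:
`(I - X) A = I - X^m = (1 - t^n) I`. As `gcd(m, n) = 1`, the matrix `X = C^n` is a weighted
permutation matrix of an `m`-cycle, so in the Leibniz expansion of `det (I - X)` only the
identity and that cycle survive, giving `det (I - X) = 1 - t^n`. Hence, when `t^n ≠ 1`,
`det A = (1 - t^n)^(m-1)` and `adj A = (1 - t^n)^(m-2) (I - X)`; both sides are continuous in `t`
and the roots of `t^n = 1` are finitely many, so this holds for all `t`. Finally
`(∑_{i<s} X^i)(I - X) = I - X^s`.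
-/

open Matrix Finset

namespace Equiv.Perm

variable {α : Type*} [Fintype α] [DecidableEq α]

theorem IsCycle.eq_of_forall_apply_eq_or_eq {σ τ : Perm α} (hσ : σ.IsCycle)
    (hsupp : σ.support = univ) (h : ∀ i, τ i = i ∨ τ i = σ i) (hτ : τ ≠ 1) : τ = σ := by
  have hmove : ∀ i, σ i ≠ i := fun i => mem_support.1 (hsupp ▸ mem_univ i)
  have hstep : ∀ i, τ i ≠ i → τ (σ i) ≠ σ i := fun i hi hσi =>
    hmove i (τ.injective (hσi.trans ((h i).resolve_left hi).symm))
  obtain ⟨i₀, hi₀⟩ : ∃ i, τ i ≠ i := by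
    by_contra! hfix
    exact hτ (Equiv.ext hfix)
  have horbit : ∀ a : ℕ, τ ((σ ^ a) i₀) ≠ (σ ^ a) i₀ := by
    intro a
    induction a with
    | zero => exact hi₀
    | succ a ih => rw [pow_succ', mul_apply]; exact hstep _ ih
  refine Equiv.ext fun j => (h j).resolve_left ?_
  obtain ⟨a, rfl⟩ := hσ.exists_pow_eq (hmove i₀) (hmove j)
  exact horbit a

end Equiv.Perm

open Fin.NatCast in
lemma finRotate_pow_apply (k l : ℕ) (i : Fin (k + 1)) : (finRotate (k + 1) ^ l) i = i + l := by
  induction l with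
  | zero => simp
  | succ l ih =>
    rw [pow_succ', Equiv.Perm.mul_apply, ih, finRotate_apply, Nat.cast_succ, add_assoc]

namespace Matrix

variable {ι R : Type*} [DecidableEq ι]

def weightedPermMatrix [Zero R] (σ : Equiv.Perm ι) (w : ι → R) : Matrix ι ι R :=
  of fun i j => if σ i = j then w i else 0

@[simp]
lemma weightedPermMatrix_apply [Zero R] (σ : Equiv.Perm ι) (w : ι → R) (i j : ι) :
    weightedPermMatrix σ w i j = if σ i = j then w i else 0 := rfl

variable [Fintype ι]

lemma weightedPermMatrix_mul [NonUnitalNonAssocSemiring R] (σ τ : Equiv.Perm ι)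
    (w v : ι → R) :
    weightedPermMatrix σ w * weightedPermMatrix τ v =
      weightedPermMatrix (τ * σ) (fun i => w i * v (σ i)) := by
  ext i j
  rw [mul_apply, Fintype.sum_eq_single (σ i) fun k hk => by simp [Ne.symm hk]]
  simp only [weightedPermMatrix_apply, mul_ite, mul_zero, if_true, Equiv.Perm.mul_apply]
  rfl

lemma weightedPermMatrix_pow [CommSemiring R] (σ : Equiv.Perm ι) (w : ι → R) (n : ℕ) :
    weightedPermMatrix σ w ^ n =
      weightedPermMatrix (σ ^ n) (fun i => ∏ l ∈ range n, w ((σ ^ l) i)) := by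
  induction n with
  | zero =>
    ext i j
    simp only [pow_zero, prod_range_zero, weightedPermMatrix_apply, Equiv.Perm.one_apply,
      one_apply]
    rfl
  | succ n ih =>
    rw [pow_succ, ih, weightedPermMatrix_mul, pow_succ' σ n]
    simp only [prod_range_succ]

theorem det_one_sub_weightedPermMatrix [CommRing R] {σ : Equiv.Perm ι} (hσ : σ.IsCycle)
    (hsupp : σ.support = univ) (w : ι → R) :
    det (1 - weightedPermMatrix σ w) = 1 - ∏ i, w i := by
  have hmove : ∀ i, σ i ≠ i := fun i => Equiv.Perm.mem_support.1 (hsupp ▸ mem_univ i)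
  rw [← det_transpose, det_apply, Fintype.sum_eq_add 1 σ hσ.ne_one.symm]
  · have hfix : ∏ i, (1 - weightedPermMatrix σ w)ᵀ i i = 1 :=
      prod_eq_one fun i _ => by simp [hmove]
    have hcyc : ∏ i, (1 - weightedPermMatrix σ w)ᵀ (σ i) i =
        (-1) ^ Fintype.card ι * ∏ i, w i := by
      simp [fun i => (hmove i).symm, prod_neg]
    simp only [Equiv.Perm.sign_one, one_smul, Equiv.Perm.one_apply, hfix, hcyc, hσ.sign, hsupp,
      card_univ]
    rw [Units.smul_def, zsmul_eq_mul, ← mul_assoc]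
    push_cast
    rw [neg_mul, ← pow_add, Even.neg_one_pow ⟨_, rfl⟩, neg_one_mul, sub_eq_add_neg]
  · rintro τ ⟨h1, hτσ⟩
    obtain ⟨i, hi⟩ : ∃ i, τ i ≠ i ∧ τ i ≠ σ i := by
      by_contra! h
      exact hτσ (hσ.eq_of_forall_apply_eq_or_eq hsupp (fun i => or_iff_not_imp_left.2 (h i))
        h1)
    refine smul_eq_zero_of_right _ (prod_eq_zero (mem_univ i) ?_)
    simp [Ne.symm hi.1, Ne.symm hi.2]

theorem det_one_sub_weightedPermMatrix_pow [CommRing R] {σ : Equiv.Perm ι} (hσ : σ.IsCycle)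
    (hsupp : σ.support = univ) (w : ι → R) {n : ℕ} (hn : n.Coprime (orderOf σ)) :
    det (1 - weightedPermMatrix σ w ^ n) = 1 - (∏ i, w i) ^ n := by
  rw [weightedPermMatrix_pow, det_one_sub_weightedPermMatrix (hσ.pow_iff.2 hn)
    (by rw [Equiv.Perm.support_pow_coprime hn, hsupp]), prod_comm]
  simp only [Equiv.prod_comp, prod_const, card_range]

theorem adjugate_geom_sum_of_pow_eq_smul_one {K : Type*} [Field K] {m : ℕ} (hm : 2 ≤ m)
    {X : Matrix (Fin m) (Fin m) K} {D : K} (hD : D ≠ 0) (hXm : X ^ m = (1 - D) • 1)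
    (hdet : det (1 - X) = D) :
    adjugate (∑ i ∈ range m, X ^ i) = D ^ (m - 2) • (1 - X) := by
  set A := ∑ i ∈ range m, X ^ i
  have hA : (1 - X) * A = D • 1 := by
    rw [mul_neg_geom_sum, hXm, sub_smul, one_smul, sub_sub_cancel]
  have hdetA : det A = D ^ (m - 1) := by
    have h := congrArg det hA
    rw [det_mul, hdet, det_smul, det_one, mul_one, Fintype.card_fin,
      ← mul_pow_sub_one (by omega) D] at h
    exact mul_left_cancel₀ hD h
  refine smul_right_injective _ hD ?_
  calc D • adjugate A = (1 - X) * A * adjugate A := by rw [hA, smul_mul_assoc, one_mul]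
    _ = D ^ (m - 1) • (1 - X) := by
      rw [mul_assoc, mul_adjugate, hdetA, mul_smul_comm, mul_one]
    _ = D • D ^ (m - 2) • (1 - X) := by
      rw [smul_smul, ← pow_succ', show m - 2 + 1 = m - 1 by omega]

open Fin.NatCast in
lemma weightedPermMatrix_finRotate_pow_self [CommSemiring R] (k : ℕ) (w : Fin (k + 1) → R) :
    weightedPermMatrix (finRotate (k + 1)) w ^ (k + 1) = (∏ i, w i) • 1 := by
  have hw : ∀ i, ∏ l ∈ range (k + 1), w (i + l) = ∏ i, w i := fun i => by
    rw [← Fin.prod_univ_eq_prod_range (fun l => w (i + l))]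
    simp only [Fin.cast_val_eq_self]
    exact Equiv.prod_comp (Equiv.addLeft i) w
  ext i j
  simp [weightedPermMatrix_pow, finRotate_pow_apply, hw, one_apply]

/-- The matrix `C` of the statement for `m = k + 1`: the cyclic shift with `t` in the
wrap-around entry. -/
def twistedCyclicShift [Zero R] [One R] (k : ℕ) (t : R) :
    Matrix (Fin (k + 1)) (Fin (k + 1)) R :=
  weightedPermMatrix (finRotate (k + 1)) (Pi.mulSingle (Fin.last k) t)

lemma twistedCyclicShift_apply [Zero R] [One R] (k : ℕ) (t : R) (i j : Fin (k + 1)) :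
    twistedCyclicShift k t i j =
      if (i : ℕ) + 1 = j then 1 else if (i : ℕ) = k + 1 - 1 ∧ (j : ℕ) = 0 then t else 0 := by
  rcases eq_or_ne i (Fin.last k) with rfl | hi
  · simp only [twistedCyclicShift, weightedPermMatrix_apply, finRotate_last,
      Pi.mulSingle_eq_same, Fin.ext_iff, Fin.val_last, Fin.val_zero]
    have := j.isLt
    split_ifs <;> first | rfl | omega
  · have := coe_finRotate_of_ne_last hi
    simp only [twistedCyclicShift, weightedPermMatrix_apply, Fin.ext_iff, this,
      Pi.mulSingle_eq_of_ne hi]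
    have : (i : ℕ) ≠ k := fun h => hi (Fin.ext h)
    split_ifs <;> first | rfl | omega

lemma twistedCyclicShift_pow_self [CommSemiring R] (k : ℕ) (t : R) :
    twistedCyclicShift k t ^ (k + 1) = t • 1 := by
  rw [twistedCyclicShift, weightedPermMatrix_finRotate_pow_self, Fintype.prod_pi_mulSingle']

lemma det_one_sub_twistedCyclicShift_pow [CommRing R] {k n : ℕ} (hk : 1 ≤ k)
    (hkn : (k + 1).Coprime n) (t : R) :
    det (1 - twistedCyclicShift k t ^ n) = 1 - t ^ n := by
  have hσ := isCycle_finRotate_of_le (show 2 ≤ k + 1 by omega)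
  have hsupp := support_finRotate_of_le (show 2 ≤ k + 1 by omega)
  rw [twistedCyclicShift, det_one_sub_weightedPermMatrix_pow hσ hsupp _ (by
    rwa [hσ.orderOf, hsupp, card_univ, Fintype.card_fin, Nat.coprime_comm]),
    Fintype.prod_pi_mulSingle']

@[fun_prop]
lemma continuous_twistedCyclicShift (k : ℕ) : Continuous (twistedCyclicShift k : ℂ → _) := by
  refine continuous_matrix fun i j => ?_
  simp only [twistedCyclicShift, weightedPermMatrix_apply, Pi.mulSingle_apply]
  split_ifs <;> fun_prop

theorem adjugate_geom_sum_twistedCyclicShift_pow {k n : ℕ} (hk : 1 ≤ k)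
    (hkn : (k + 1).Coprime n) (t : ℂ) :
    adjugate (∑ i ∈ range (k + 1), (twistedCyclicShift k t ^ n) ^ i) =
      (1 - t ^ n) ^ (k + 1 - 2) • (1 - twistedCyclicShift k t ^ n) := by
  have hn : 0 < n := Nat.pos_of_ne_zero <| by rintro rfl; simp at hkn; omega
  have hgeneric : ∀ τ ∈ (Polynomial.nthRootsFinset n (1 : ℂ) : Set ℂ)ᶜ,
      adjugate (∑ i ∈ range (k + 1), (twistedCyclicShift k τ ^ n) ^ i) =
        (1 - τ ^ n) ^ (k + 1 - 2) • (1 - twistedCyclicShift k τ ^ n) := fun τ hτ =>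
    adjugate_geom_sum_of_pow_eq_smul_one (by omega)
      (sub_ne_zero.2 (Ne.symm (mt (Polynomial.mem_nthRootsFinset hn 1).2 hτ)))
      (by rw [← pow_mul, mul_comm, pow_mul, twistedCyclicShift_pow_self, smul_pow, one_pow,
        sub_sub_cancel])
      (det_one_sub_twistedCyclicShift_pow hk hkn τ)
  have hdense := (Polynomial.nthRootsFinset n (1 : ℂ)).countable_toSet.dense_compl ℂ
  exact congrFun (Continuous.ext_on hdense (by fun_prop) (by fun_prop) hgeneric) t

end Matrix

theorem stmt_15_general (m n : ℕ) (hm : 1 < m) (hmn : Nat.Coprime m n)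
    (s : ℤ) (t : ℂ)
    (C X : Matrix (Fin m) (Fin m) ℂ)
    (hC : ∀ i j : Fin m, C i j =
      if (i : ℕ) + 1 = (j : ℕ) then 1
      else if (i : ℕ) = m - 1 ∧ (j : ℕ) = 0 then t else 0)
    (hX : X = C ^ n) :
    (∑ i ∈ Finset.range s.toNat, X ^ i) *
        Matrix.adjugate (∑ i ∈ Finset.range m, X ^ i) =
      (1 - t ^ n) ^ (m - 2) • ((1 : Matrix (Fin m) (Fin m) ℂ) - X ^ s.toNat) := by
  obtain ⟨k, rfl⟩ : ∃ k, m = k + 1 := ⟨m - 1, by omega⟩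
  obtain rfl : C = twistedCyclicShift k t := by
    ext i j
    rw [hC, twistedCyclicShift_apply]
  rw [hX, adjugate_geom_sum_twistedCyclicShift_pow (by omega) hmn t, mul_smul_comm,
    geom_sum_mul_neg]

/-- `(Σ_{i<s} X^i) · adj(Σ_{i<m} X^i) = (1 - t^n)^(m-2) (I - X^s)`. -/
theorem stmt_15 (m n : ℕ) (hm : 1 < m) (hn : 1 < n) (hmn : Nat.Coprime m n)
    (r s : ℤ) (hbezout : (m : ℤ) * r + (n : ℤ) * s = 1)
    (hr₁ : -(n : ℤ) < r) (hr₂ : r < 0) (hs₁ : 0 < s) (hs₂ : s < (m : ℤ))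
    (t : ℂ)
    (C X : Matrix (Fin m) (Fin m) ℂ)
    (hC : ∀ i j : Fin m, C i j =
      if (i : ℕ) + 1 = (j : ℕ) then 1
      else if (i : ℕ) = m - 1 ∧ (j : ℕ) = 0 then t else 0)
    (hX : X = C ^ n) :
    (∑ i ∈ Finset.range s.toNat, X ^ i) *
        Matrix.adjugate (∑ i ∈ Finset.range m, X ^ i) =
      (1 - t ^ n) ^ (m - 2) • ((1 : Matrix (Fin m) (Fin m) ℂ) - X ^ s.toNat) :=
  stmt_15_general m n hm hmn s t C X hC hX
end

section
/- Suppose t^n ≠ 1. Then the matrices I - M and I - M^{-1} are invertible, and (I - X^{-s}) · (I - M^{-1})^{-1} · (I - Y^{-r}) = -(I - Y^{r}) · (I - M)^{-1} · (I - X^{s}). -/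
/-!
`C` is a weighted cyclic shift of `Fin m` whose weights multiply to `t`, and `Y` is diagonal
with determinant `t ^ m` (the roots of unity cancel because `n ∣ ∑ bᵢ`). Since `n s ≡ 1 (mod m)`,
`M = C ^ (n s) Y ^ r` is again a weighted shift by one step, with weights multiplying to
`t ^ (n s + m r) = t`; hence `M ^ m = t • 1`. As `t ≠ 1`, this makes `1 - M` and `1 - M⁻¹`
invertible. The identity then holds in any ring for units `A`, `B` with `1 - A B` invertible:
after left multiplication by `A`, with `P = 1 - A` and `W = 1 - A B`, the two sides become
`P W⁻¹ (P - W)` and `(P - W) W⁻¹ P`, both equal to `P W⁻¹ P - P`.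
-/

open Matrix Finset Ring

section Ring

variable {R : Type*} [Ring R]

theorem isUnit_one_sub_of_isUnit_one_sub_pow {x : R} {k : ℕ} (h : IsUnit (1 - x ^ k)) :
    IsUnit (1 - x) := by
  have hc : Commute (1 - x) (∑ i ∈ range k, x ^ i) :=
    (mul_neg_geom_sum x k).trans (geom_sum_mul_neg x k).symm
  rw [← mul_neg_geom_sum] at h
  exact (hc.isUnit_mul_iff.mp h).1

theorem one_sub_inverse_eq_neg_inverse_mul {u : R} (hu : IsUnit u) :
    1 - u⁻¹ʳ = -(u⁻¹ʳ * (1 - u)) := by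
  rw [mul_sub, mul_one, inverse_mul_cancel u hu, neg_sub]

theorem isUnit_one_sub_inverse {u : R} (hu : IsUnit u) (h : IsUnit (1 - u)) :
    IsUnit (1 - u⁻¹ʳ) := by
  rw [one_sub_inverse_eq_neg_inverse_mul hu]
  exact (hu.ringInverse.mul h).neg

theorem inverse_one_sub_inverse {u : R} (hu : IsUnit u) (h : IsUnit (1 - u)) :
    (1 - u⁻¹ʳ)⁻¹ʳ = -((1 - u)⁻¹ʳ * u) := by
  obtain ⟨u, rfl⟩ := hu
  obtain ⟨w, hw⟩ := h
  rw [one_sub_inverse_eq_neg_inverse_mul u.isUnit, ← hw, inverse_unit, ← Units.val_mul,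
    ← Units.val_neg, inverse_unit, inverse_unit]
  simp [_root_.mul_inv_rev]

theorem one_sub_inverse_mul_inverse_one_sub_inverse_mul {a b : R} (ha : IsUnit a)
    (hb : IsUnit b) (h : IsUnit (1 - a * b)) :
    (1 - a⁻¹ʳ) * (1 - (a * b)⁻¹ʳ)⁻¹ʳ * (1 - b⁻¹ʳ) =
      -((1 - b) * (1 - a * b)⁻¹ʳ * (1 - a)) := by
  rw [inverse_one_sub_inverse (ha.mul hb) h]
  obtain ⟨a, rfl⟩ := ha
  obtain ⟨b, rfl⟩ := hb
  obtain ⟨w, hw⟩ := h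
  rw [← hw, inverse_unit, inverse_unit, inverse_unit]
  have hab : (a : R) * b = 1 - w := by rw [hw]; abel
  have ha_inv : (a : R) * (1 - ↑a⁻¹) = -(1 - a) := by
    rw [mul_sub, mul_one, Units.mul_inv]; abel
  have hb_inv : (a : R) * b * (1 - ↑b⁻¹) = (1 - a) - w := by
    rw [mul_sub, mul_one, mul_assoc, Units.mul_inv, mul_one, hab]; abel
  have ha_sub : (a : R) * (1 - b) = -((1 - a) - w) := by rw [mul_sub, mul_one, hab]; abel
  refine (Units.mul_right_inj a).mp ?_
  calc (a : R) * ((1 - ↑a⁻¹) * -(↑w⁻¹ * (↑a * ↑b)) * (1 - ↑b⁻¹))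
      = -(a * (1 - ↑a⁻¹)) * ↑w⁻¹ * (a * b * (1 - ↑b⁻¹)) := by noncomm_ring
    _ = (1 - a) * ↑w⁻¹ * ((1 - a) - w) := by rw [ha_inv, hb_inv, neg_neg]
    _ = ((1 - a) - w) * ↑w⁻¹ * (1 - a) := by
        simp only [mul_sub, sub_mul, mul_assoc, Units.inv_mul, Units.mul_inv, mul_one, one_mul]
        abel
    _ = -(a * (1 - b)) * ↑w⁻¹ * (1 - a) := by rw [ha_sub, neg_neg]
    _ = a * -((1 - b) * ↑w⁻¹ * (1 - a)) := by noncomm_ring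

end Ring

section Algebra

variable {K A : Type*}

theorem isUnit_of_pow_eq_smul_one [CommSemiring K] [Semiring A] [Algebra K A] {x : A} {k : ℕ}
    {c : K} (hk : k ≠ 0) (hx : x ^ k = c • 1) (hc : IsUnit c) : IsUnit x := by
  refine (isUnit_pow_iff hk).mp ?_
  rw [hx, ← Algebra.algebraMap_eq_smul_one]
  exact hc.map _

theorem isUnit_one_sub_of_pow_eq_smul_one [CommRing K] [Ring A] [Algebra K A] {x : A} {k : ℕ}
    {c : K} (hx : x ^ k = c • 1) (hc : IsUnit (1 - c)) : IsUnit (1 - x) := by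
  refine isUnit_one_sub_of_isUnit_one_sub_pow (k := k) ?_
  rw [hx, ← Algebra.algebraMap_eq_smul_one, ← map_one (algebraMap K A), ← map_sub]
  exact hc.map _

end Algebra

section Products

variable {G M : Type*} [CommMonoid M]

theorem prod_prod_range_add_nsmul [AddGroup G] [Fintype G] (f : G → M) (a : G) (k : ℕ) :
    ∏ i, ∏ j ∈ range k, f (i + j • a) = (∏ i, f i) ^ k := by
  rw [prod_comm]
  exact (prod_congr rfl fun j _ => Equiv.prod_comp (Equiv.addRight (j • a)) f).trans
    (by rw [prod_const, card_range])

theorem prod_ite_val_eq_sub_one {m : ℕ} [NeZero m] (t : M) :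
    ∏ i : Fin m, (if (i : ℕ) = m - 1 then t else 1) = t := by
  rw [Fintype.prod_eq_single ⟨m - 1, Nat.sub_one_lt (NeZero.ne m)⟩ fun i hi =>
    if_neg fun h => hi (Fin.ext h), if_pos rfl]

end Products

namespace Matrix

open scoped Fin.CommRing

section WeightedShift

variable {R : Type*} [CommSemiring R] {m : ℕ} [NeZero m]

def weightedShift (a : Fin m) (f : Fin m → R) : Matrix (Fin m) (Fin m) R :=
  of fun i j => if i + a = j then f i else 0

theorem weightedShift_zero (f : Fin m → R) : weightedShift 0 f = diagonal f := by
  ext i j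
  simp [weightedShift, diagonal_apply]

theorem weightedShift_mul (a b : Fin m) (f g : Fin m → R) :
    weightedShift a f * weightedShift b g = weightedShift (a + b) fun i => f i * g (i + a) := by
  ext i j
  simp only [weightedShift, mul_apply, of_apply]
  rw [Fintype.sum_eq_single (i + a) fun l hl => by rw [if_neg (Ne.symm hl), zero_mul]]
  simp only [if_pos, mul_ite, mul_zero, add_assoc]

theorem weightedShift_pow (a : Fin m) (f : Fin m → R) (k : ℕ) :
    weightedShift a f ^ k = weightedShift (k • a) fun i => ∏ j ∈ range k, f (i + j • a) := by
  induction k with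
  | zero => simp [weightedShift_zero]
  | succ k ih =>
    rw [pow_succ, ih, weightedShift_mul, succ_nsmul]
    simp only [prod_range_succ]

theorem weightedShift_one_pow_card (f : Fin m → R) :
    weightedShift 1 f ^ m = (∏ i, f i) • 1 := by
  have hcycle (i : Fin m) : ∏ j ∈ range m, f (i + j • 1) = ∏ i, f i := by
    rw [← Fin.prod_univ_eq_prod_range (fun j => f (i + j • 1))]
    simp only [nsmul_eq_mul, mul_one, Fin.cast_val_eq_self]
    exact Equiv.prod_comp (Equiv.addLeft i) f
  rw [weightedShift_pow, smul_one_eq_diagonal, ← weightedShift_zero, funext hcycle, nsmul_eq_mul,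
    mul_one, Fin.natCast_self]

theorem weightedShift_one_pow_mul_diagonal_pow_card {k : ℕ} (hk : k ≡ 1 [MOD m])
    (f g : Fin m → R) :
    (weightedShift 1 f ^ k * diagonal g) ^ m = ((∏ i, f i) ^ k * ∏ i, g i) • 1 := by
  rw [weightedShift_pow, ← weightedShift_zero, weightedShift_mul, add_zero,
    show k • (1 : Fin m) = 1 from Fin.ext (by rw [nsmul_eq_mul, mul_one, Fin.val_natCast, hk,
      Fin.val_one']), weightedShift_one_pow_card, prod_mul_distrib, prod_prod_range_add_nsmul,
    Fintype.prod_equiv (Equiv.addRight 1) (fun i => g (i + 1)) g fun _ => rfl]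

def cyclicShift (t : R) : Matrix (Fin m) (Fin m) R :=
  weightedShift 1 fun i => if (i : ℕ) = m - 1 then t else 1

theorem cyclicShift_apply (t : R) (i j : Fin m) :
    cyclicShift t i j =
      if (i : ℕ) + 1 = j then 1 else if (i : ℕ) = m - 1 ∧ (j : ℕ) = 0 then t else 0 := by
  obtain ⟨k, rfl⟩ := Nat.exists_eq_add_one_of_ne_zero (NeZero.ne m)
  simp only [cyclicShift, weightedShift, of_apply, Fin.ext_iff, Fin.val_add_one, Fin.val_last]
  have := j.isLt
  split_ifs <;> first | rfl | omega

theorem cyclicShift_pow_card (t : R) :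
    (cyclicShift t : Matrix (Fin m) (Fin m) R) ^ m = t • 1 := by
  rw [cyclicShift, weightedShift_one_pow_card, prod_ite_val_eq_sub_one]

end WeightedShift

theorem diagonal_zpow {K ι : Type*} [Field K] [Fintype ι] [DecidableEq ι] {d : ι → K}
    (hd : ∀ i, d i ≠ 0) (z : ℤ) : diagonal d ^ z = diagonal fun i => d i ^ z := by
  cases z with
  | ofNat k => simp only [Int.ofNat_eq_natCast, zpow_natCast, diagonal_pow, Pi.pow_def]
  | negSucc k =>
    rw [zpow_negSucc, diagonal_pow]
    refine inv_eq_right_inv ?_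
    rw [diagonal_mul_diagonal, ← diagonal_one]
    congr 1
    funext i
    rw [zpow_negSucc, Pi.pow_apply, mul_inv_cancel₀ (pow_ne_zero _ (hd i))]

theorem cyclicShift_pow_mul_diagonal_zpow_pow_card {K : Type*} [Field K] {m : ℕ} [NeZero m]
    {t : K} (ht : t ≠ 0) {d : Fin m → K} (hd : ∀ i, d i ≠ 0) (hprod : ∏ i, d i = t ^ m)
    {k : ℕ} {r : ℤ} (hkr : (k : ℤ) + m * r = 1) :
    (cyclicShift t ^ k * diagonal d ^ r) ^ m = t • 1 := by
  have hk : k ≡ 1 [MOD m] := (Nat.modEq_iff_dvd.mpr ⟨-r, by push_cast; linarith⟩).symm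
  rw [diagonal_zpow hd, cyclicShift, weightedShift_one_pow_mul_diagonal_pow_card hk,
    prod_ite_val_eq_sub_one, prod_zpow, hprod, ← zpow_natCast, ← zpow_natCast,
    ← _root_.zpow_mul, ← zpow_add₀ ht, hkr, zpow_one]

end Matrix

theorem prod_exp_two_pi_I_mul_div {ι : Type*} [Fintype ι] {n : ℕ} (hn : n ≠ 0) (b : ι → ℤ)
    (hb : (n : ℤ) ∣ ∑ i, b i) :
    ∏ i, Complex.exp (2 * Real.pi * Complex.I * b i / n) = 1 := by
  obtain ⟨k, hk⟩ := hb
  rw [← Complex.exp_sum, Complex.exp_eq_one_iff]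
  refine ⟨k, ?_⟩
  rw [← sum_div, ← mul_sum, ← Int.cast_sum, hk]
  push_cast
  field_simp

theorem stmt_17_general (m n : ℕ) (hm : 1 < m) (hn : 1 < n)
    (r s : ℤ) (hbezout : (m : ℤ) * r + (n : ℤ) * s = 1)
    (hs₁ : 0 < s)
    (t : ℂ) (ht0 : t ≠ 0) (htn : t ^ n ≠ 1)
    (b : Fin m → ℤ) (hb : (n : ℤ) ∣ ∑ i, b i)
    (C X Y M : Matrix (Fin m) (Fin m) ℂ)
    (hC : ∀ i j : Fin m, C i j =
      if (i : ℕ) + 1 = (j : ℕ) then 1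
      else if (i : ℕ) = m - 1 ∧ (j : ℕ) = 0 then t else 0)
    (hX : X = C ^ n)
    (hY : Y = t • Matrix.diagonal
      (fun i => Complex.exp (2 * (Real.pi : ℂ) * Complex.I * (b i : ℂ) / (n : ℂ))))
    (hM : M = X ^ s * Y ^ r) :
    IsUnit (1 - M) ∧ IsUnit (1 - M⁻¹) ∧
    (1 - X ^ (-s)) * (1 - M⁻¹)⁻¹ * (1 - Y ^ (-r)) =
      -((1 - Y ^ r) * (1 - M)⁻¹ * (1 - X ^ s)) := by
  have : NeZero m := ⟨by omega⟩
  lift s to ℕ using hs₁.le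
  have hCt : C = cyclicShift t := ext fun i j => (hC i j).trans (cyclicShift_apply t i j).symm
  set e : Fin m → ℂ := fun i => Complex.exp (2 * Real.pi * Complex.I * b i / n)
  have he : ∏ i, e i = 1 := prod_exp_two_pi_I_mul_div (by omega) b hb
  rw [← diagonal_smul] at hY
  have hd : ∀ i, (t • e) i ≠ 0 := fun i => mul_ne_zero ht0 (Complex.exp_ne_zero _)
  have hdprod : ∏ i, (t • e) i = t ^ m := by
    simp only [Pi.smul_apply, smul_eq_mul, prod_mul_distrib, prod_const, card_univ,
      Fintype.card_fin, he, mul_one]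
  have hMm : M ^ m = t • 1 := by
    rw [hM, hX, hCt, hY, zpow_natCast, ← pow_mul]
    exact cyclicShift_pow_mul_diagonal_zpow_pow_card ht0 hd hdprod (by push_cast; linarith)
  have hXdet : IsUnit X.det := by
    have hCu := isUnit_of_pow_eq_smul_one (NeZero.ne m) (cyclicShift_pow_card t) ht0.isUnit
    rw [hX, hCt, det_pow]
    exact ((isUnit_iff_isUnit_det _).mp hCu).pow n
  have hYdet : IsUnit Y.det := by
    rw [hY, det_diagonal]
    exact (prod_ne_zero_iff.mpr fun i _ => hd i).isUnit
  have hA : IsUnit (X ^ (s : ℤ)) := (isUnit_iff_isUnit_det _).mpr (hXdet.det_zpow _)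
  have hB : IsUnit (Y ^ r) := (isUnit_iff_isUnit_det _).mpr (hYdet.det_zpow _)
  have ht1 : IsUnit (1 - t) := (sub_ne_zero.mpr fun h => htn (by rw [← h, one_pow])).isUnit
  have h1M : IsUnit (1 - M) := isUnit_one_sub_of_pow_eq_smul_one hMm ht1
  simp only [nonsing_inv_eq_ringInverse, Matrix.zpow_neg hXdet, Matrix.zpow_neg hYdet]
  rw [hM] at h1M ⊢
  exact ⟨h1M, isUnit_one_sub_inverse (hA.mul hB) h1M,
    one_sub_inverse_mul_inverse_one_sub_inverse_mul hA hB h1M⟩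

/-- If `t^n ≠ 1` then `I - M` and `I - M⁻¹` are invertible and
`(I - X^(-s))(I - M⁻¹)⁻¹(I - Y^(-r)) = -(I - Y^r)(I - M)⁻¹(I - X^s)`. -/
theorem stmt_17 (m n : ℕ) (hm : 1 < m) (hn : 1 < n) (hmn : Nat.Coprime m n)
    (r s : ℤ) (hbezout : (m : ℤ) * r + (n : ℤ) * s = 1)
    (hr₁ : -(n : ℤ) < r) (hr₂ : r < 0) (hs₁ : 0 < s) (hs₂ : s < (m : ℤ))
    (t : ℂ) (ht0 : t ≠ 0) (htn : t ^ n ≠ 1)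
    (b : Fin m → ℤ) (hb : (n : ℤ) ∣ ∑ i, b i)
    (C X Y M : Matrix (Fin m) (Fin m) ℂ)
    (hC : ∀ i j : Fin m, C i j =
      if (i : ℕ) + 1 = (j : ℕ) then 1
      else if (i : ℕ) = m - 1 ∧ (j : ℕ) = 0 then t else 0)
    (hX : X = C ^ n)
    (hY : Y = t • Matrix.diagonal
      (fun i => Complex.exp (2 * (Real.pi : ℂ) * Complex.I * (b i : ℂ) / (n : ℂ))))
    (hM : M = X ^ s * Y ^ r) :
    IsUnit (1 - M) ∧ IsUnit (1 - M⁻¹) ∧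
    (1 - X ^ (-s)) * (1 - M⁻¹)⁻¹ * (1 - Y ^ (-r)) =
      -((1 - Y ^ r) * (1 - M)⁻¹ * (1 - X ^ s)) :=
  stmt_17_general m n hm hn r s hbezout hs₁ t ht0 htn b hb C X Y M hC hX hY hM
end

section
/- For every t ∈ ℂ with t ≠ 0, t ≠ 1, t^m ≠ 1 and t^n ≠ 1, the matrices ∂₁ := (1 - t^{-n}, 1 - t^{-m}) (a 1×2 row), ∂₂ (the 2×2 matrix with entries ∂₂_{11} = t^{n-mn}(1 - t^{mn})/(1 - t^n), ∂₂_{12} = -t^{mr+n} ((1 - t^{mn})/(1 - t^n)) ((1 - t^{ns})/(1 - t)), ∂₂_{21} = -t^{m-mn}(1 - t^{mn})/(1 - t^m), ∂₂_{22} = t^{mr+m} ((1 - t^{mn})/(1 - t^m)) ((1 - t^{ns})/(1 - t))), and ∂₃ := (1 - t^{-ns}, t^{-mn} - t^{-mn-1})^⊤ (a 2×1 column) satisfy ∂₁ · ∂₂ = 0 and ∂₂ · ∂₃ = 0. -/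
/-!
The matrix `∂₂` has rank one: it is the outer product of the column
`u = (tⁿ(1 - t^{mn})/(1 - tⁿ), -t^m(1 - t^{mn})/(1 - t^m))` and the row
`v = (t^{-mn}, -t^{mr}(1 - t^{ns})/(1 - t))`. Hence `∂₁∂₂ = (∂₁u) v` and `∂₂∂₃ = u (v∂₃)`, and both
scalars vanish: `∂₁u = -(1 - t^{mn}) + (1 - t^{mn})` since `(1 - t^{-k}) t^k = -(1 - t^k)`, and
`v∂₃ = 0` once `t^{mr}` is rewritten as `t^{1 - ns}` by the Bézout relation.
-/

open Matrix

section ZPowIdentities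

variable {K : Type*} [Field K] {t : K}

theorem one_sub_zpow_neg_mul_zpow (ht : t ≠ 0) (k : ℤ) :
    (1 - t ^ (-k)) * t ^ k = -(1 - t ^ k) := by
  rw [sub_mul, _root_.zpow_neg, inv_mul_cancel₀ (zpow_ne_zero k ht)]
  ring

theorem one_sub_zpow_neg_mul_zpow_mul_div (ht : t ≠ 0) {k : ℤ} (htk : t ^ k ≠ 1) (a : K) :
    (1 - t ^ (-k)) * (t ^ k * a / (1 - t ^ k)) = -a := by
  rw [mul_div_assoc', ← mul_assoc, one_sub_zpow_neg_mul_zpow ht, neg_mul, neg_div,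
    mul_div_cancel_left₀ _ (sub_ne_zero.2 htk.symm)]

end ZPowIdentities

namespace TorusKnot

variable {K : Type*} [Field K] (m n r s : ℤ) (t : K)

def boundaryCol : Fin 2 → K :=
  ![t ^ n * (1 - t ^ (m * n)) / (1 - t ^ n), -(t ^ m * (1 - t ^ (m * n)) / (1 - t ^ m))]

def boundaryRow : Fin 2 → K :=
  ![t ^ (-(m * n)), -(t ^ (m * r) * ((1 - t ^ (n * s)) / (1 - t)))]

variable {m n r s t}

theorem boundary₂_eq_vecMulVec (ht : t ≠ 0) :
    !![t ^ (n - m * n) * (1 - t ^ (m * n)) / (1 - t ^ n),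
        -t ^ (m * r + n) * ((1 - t ^ (m * n)) / (1 - t ^ n)) * ((1 - t ^ (n * s)) / (1 - t));
        -t ^ (m - m * n) * (1 - t ^ (m * n)) / (1 - t ^ m),
        t ^ (m * r + m) * ((1 - t ^ (m * n)) / (1 - t ^ m)) * ((1 - t ^ (n * s)) / (1 - t))] =
      vecMulVec (boundaryCol m n t) (boundaryRow m n r s t) := by
  ext i j
  fin_cases i <;> fin_cases j <;>
    simp [boundaryCol, boundaryRow, vecMulVec_apply, sub_eq_add_neg, zpow_add₀ ht] <;> ring

theorem boundary₁_mulVec_boundaryCol (ht : t ≠ 0) (htm : t ^ m ≠ 1) (htn : t ^ n ≠ 1) :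
    !![1 - t ^ (-n), 1 - t ^ (-m)] *ᵥ boundaryCol m n t = 0 := by
  ext i
  simp only [boundaryCol, mulVec, dotProduct, Fin.sum_univ_two, of_apply, cons_val',
    cons_val_zero, cons_val_one, cons_val_fin_one, Pi.zero_apply]
  rw [mul_neg, one_sub_zpow_neg_mul_zpow_mul_div ht htm, one_sub_zpow_neg_mul_zpow_mul_div ht htn,
    neg_neg, neg_add_cancel]

theorem boundaryRow_vecMul_boundary₃ (ht0 : t ≠ 0) (ht1 : t ≠ 1) (hrs : m * r + n * s = 1) :
    boundaryRow m n r s t ᵥ* !![1 - t ^ (-(n * s)); t ^ (-(m * n)) - t ^ (-(m * n) - 1)] = 0 := by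
  have hmr : m * r = 1 - n * s := by omega
  have ht1' : 1 - t ≠ 0 := sub_ne_zero.2 ht1.symm
  ext j
  simp only [boundaryRow, vecMul, dotProduct, Fin.sum_univ_two, of_apply, cons_val',
    cons_val_zero, cons_val_one, cons_val_fin_one, Pi.zero_apply, hmr, zpow_sub₀ ht0,
    _root_.zpow_neg, zpow_one]
  field_simp
  ring

end TorusKnot

theorem stmt_19_general (m n r s : ℤ)
    (hbezout : m * r + n * s = 1)
    (t : ℂ) (ht0 : t ≠ 0) (ht1 : t ≠ 1) (htm : t ^ m ≠ 1) (htn : t ^ n ≠ 1)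
    (D1 : Matrix (Fin 1) (Fin 2) ℂ) (D2 : Matrix (Fin 2) (Fin 2) ℂ)
    (D3 : Matrix (Fin 2) (Fin 1) ℂ)
    (hD1 : D1 = !![1 - t ^ (-n), 1 - t ^ (-m)])
    (hD2 : D2 = !![t ^ (n - m * n) * (1 - t ^ (m * n)) / (1 - t ^ n),
                   -t ^ (m * r + n) * ((1 - t ^ (m * n)) / (1 - t ^ n)) *
                     ((1 - t ^ (n * s)) / (1 - t));
                   -t ^ (m - m * n) * (1 - t ^ (m * n)) / (1 - t ^ m),
                   t ^ (m * r + m) * ((1 - t ^ (m * n)) / (1 - t ^ m)) *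
                     ((1 - t ^ (n * s)) / (1 - t))])
    (hD3 : D3 = !![1 - t ^ (-(n * s)); t ^ (-(m * n)) - t ^ (-(m * n) - 1)]) :
    D1 * D2 = 0 ∧ D2 * D3 = 0 := by
  rw [hD2, TorusKnot.boundary₂_eq_vecMulVec ht0, hD1, hD3, mul_vecMulVec, vecMulVec_mul,
    TorusKnot.boundary₁_mulVec_boundaryCol ht0 htm htn,
    TorusKnot.boundaryRow_vecMul_boundary₃ ht0 ht1 hbezout]
  exact ⟨zero_vecMulVec _, by ext; simp [vecMulVec_apply]⟩

/-- The boundary maps `∂₁`, `∂₂`, `∂₃` of the chain complex of the universal cover of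
`X_{T(m,n)}` (specialized along the abelianization) satisfy `∂₁ ∂₂ = 0` and `∂₂ ∂₃ = 0`. -/
theorem stmt_19 (m n r s : ℤ) (hm : 1 < m) (hn : 1 < n) (hmn : IsCoprime m n)
    (hbezout : m * r + n * s = 1) (hr₁ : -n < r) (hr₂ : r < 0) (hs₁ : 0 < s) (hs₂ : s < m)
    (t : ℂ) (ht0 : t ≠ 0) (ht1 : t ≠ 1) (htm : t ^ m ≠ 1) (htn : t ^ n ≠ 1)
    (D1 : Matrix (Fin 1) (Fin 2) ℂ) (D2 : Matrix (Fin 2) (Fin 2) ℂ)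
    (D3 : Matrix (Fin 2) (Fin 1) ℂ)
    (hD1 : D1 = !![1 - t ^ (-n), 1 - t ^ (-m)])
    (hD2 : D2 = !![t ^ (n - m * n) * (1 - t ^ (m * n)) / (1 - t ^ n),
                   -t ^ (m * r + n) * ((1 - t ^ (m * n)) / (1 - t ^ n)) *
                     ((1 - t ^ (n * s)) / (1 - t));
                   -t ^ (m - m * n) * (1 - t ^ (m * n)) / (1 - t ^ m),
                   t ^ (m * r + m) * ((1 - t ^ (m * n)) / (1 - t ^ m)) *
                     ((1 - t ^ (n * s)) / (1 - t))])
    (hD3 : D3 = !![1 - t ^ (-(n * s)); t ^ (-(m * n)) - t ^ (-(m * n) - 1)]) :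
    D1 * D2 = 0 ∧ D2 * D3 = 0 :=
  stmt_19_general m n r s hbezout t ht0 ht1 htm htn D1 D2 D3 hD1 hD2 hD3
end
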